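/- Let μ be a non-atomic Borel probability measure on the Cantor space Ω. Then there exists a sequence (x_k)_{k≥1} of finite binary strings whose cylinders [x_k] are pairwise disjoint and satisfy μ([x_k]) < 1 for all k, such that ∑_{k : μ([x_k]) > 0} 1/log(1/μ([x_k])) = +∞. -/

import Mathlib

open MeasureTheory Filter
open scoped ENNReal

/-- The cylinder `[x]` of a finite binary string `x` in the Cantor space `ℕ → Bool`:
the set of infinite sequences extending `x`. -/
def cyl (x : List Bool) : Set (ℕ → Bool) :=
  {ω | ∀ i : ℕ, (h : i < x.length) → ω i = x.get ⟨i, h⟩}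

lemma cyl_nil : cyl [] = Set.univ := by
  ext ω; simp [cyl]

lemma measurableSet_cyl (x : List Bool) : MeasurableSet (cyl x) := by
  have : cyl x = ⋂ (i : Fin x.length), (fun ω : ℕ → Bool => ω i) ⁻¹' {x.get i} := by
    ext ω
    simp only [cyl, Set.mem_setOf_eq, Set.mem_iInter, Set.mem_preimage, Set.mem_singleton_iff]
    constructor
    · intro h i; exact h i i.2
    · intro h i hi; exact h ⟨i, hi⟩
  rw [this]
  exact MeasurableSet.iInter fun i => (measurable_pi_apply _) (measurableSet_singleton _)

lemma cyl_append_subset (x y : List Bool) : cyl (x ++ y) ⊆ cyl x := by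
  intro ω hω i hi
  have h2 : i < (x ++ y).length := by simp; omega
  have := hω i h2
  simpa [List.get_eq_getElem, List.getElem_append_left hi] using this

lemma mem_cyl_concat {x : List Bool} {b : Bool} {ω : ℕ → Bool} :
    ω ∈ cyl (x ++ [b]) ↔ ω ∈ cyl x ∧ ω x.length = b := by
  constructor
  · intro h
    refine ⟨cyl_append_subset x [b] h, ?_⟩
    have hl : x.length < (x ++ [b]).length := by simp
    simpa [List.get_eq_getElem, List.getElem_concat_length] using h x.length hl
  · rintro ⟨h1, h2⟩ i hi
    simp only [List.length_append, List.length_singleton] at hi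
    rcases lt_or_ge i x.length with h | h
    · simpa [List.get_eq_getElem, List.getElem_append_left h] using h1 i h
    · have : i = x.length := by omega
      subst this
      simpa [List.get_eq_getElem, List.getElem_concat_length] using h2

lemma cyl_eq_union (x : List Bool) :
    cyl x = cyl (x ++ [false]) ∪ cyl (x ++ [true]) := by
  ext ω
  constructor
  · intro h
    cases hb : ω x.length
    · exact Or.inl (mem_cyl_concat.2 ⟨h, hb⟩)
    · exact Or.inr (mem_cyl_concat.2 ⟨h, hb⟩)
  · rintro (h | h) <;> exact cyl_append_subset x [_] h

lemma disjoint_cyl_concat (x : List Bool) :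
    Disjoint (cyl (x ++ [false])) (cyl (x ++ [true])) := by
  rw [Set.disjoint_left]
  intro ω h1 h2
  have := (mem_cyl_concat.1 h1).2
  have := (mem_cyl_concat.1 h2).2
  simp_all

lemma disjoint_cyl_concat' (x : List Bool) (b : Bool) :
    Disjoint (cyl (x ++ [b])) (cyl (x ++ [!b])) := by
  cases b
  · simpa using disjoint_cyl_concat x
  · simpa using (disjoint_cyl_concat x).symm

noncomputable section

open Classical in
def hbit (μ : Measure (ℕ → Bool)) (s : List Bool) : Bool :=
  if μ (cyl (s ++ [false])) ≤ μ (cyl (s ++ [true])) then true else false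

def hb (μ : Measure (ℕ → Bool)) : ℕ → List Bool
  | 0 => []
  | n + 1 => hb μ n ++ [hbit μ (hb μ n)]

variable (μ : Measure (ℕ → Bool))

lemma hb_length (n : ℕ) : (hb μ n).length = n := by
  induction n with
  | zero => rfl
  | succ n ih => simp [hb, ih]

lemma measure_cyl_split (s : List Bool) :
    μ (cyl s) = μ (cyl (s ++ [false])) + μ (cyl (s ++ [true])) := by
  rw [cyl_eq_union s]
  exact measure_union (disjoint_cyl_concat s) (measurableSet_cyl _)

lemma measure_other_le (s : List Bool) :
    μ (cyl (s ++ [!hbit μ s])) ≤ μ (cyl (s ++ [hbit μ s])) := by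
  unfold hbit
  split
  case isTrue h => simpa using h
  case isFalse h => simpa using (not_le.1 h).le

lemma measure_cyl_split' (s : List Bool) :
    μ (cyl s) = μ (cyl (s ++ [hbit μ s])) + μ (cyl (s ++ [!hbit μ s])) := by
  cases h : hbit μ s
  · rw [measure_cyl_split μ s]; simp [add_comm]
  · rw [measure_cyl_split μ s]; simp [add_comm]

lemma cyl_hb_antitone : Antitone (fun n => cyl (hb μ n)) := by
  apply antitone_nat_of_succ_le
  intro n
  exact cyl_append_subset _ _

def wstar : ℕ → Bool := fun i => hbit μ (hb μ i)

lemma iInter_cyl_hb_subset : (⋂ n, cyl (hb μ n)) ⊆ {wstar μ} := by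
  intro ω hω
  simp only [Set.mem_iInter] at hω
  have : ω = wstar μ := by
    funext i
    have h := hω (i + 1)
    rw [show hb μ (i+1) = hb μ i ++ [hbit μ (hb μ i)] from rfl] at h
    have := (mem_cyl_concat.1 h).2
    rwa [hb_length] at this
  simp [this]

end

lemma mul_log_mono {c d : ℝ} (hd : 0 < d) (hdc : d ≤ c) (hc4 : c ≤ 1/4) :
    d * Real.log (1/d) ≤ c * Real.log (1/c) := by
  have hc : 0 < c := lt_of_lt_of_le hd hdc
  set r : ℝ := d / c with hrdef
  have hr : 0 < r := div_pos hd hc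
  have hr1 : r ≤ 1 := (div_le_one hc).2 hdc
  have hlog : Real.log (1/d) = Real.log (1/c) + Real.log (1/r) := by
    rw [← Real.log_mul (by positivity) (by positivity)]
    congr 1
    rw [hrdef]
    field_simp
  have h1 : r * Real.log (1/r) ≤ 1 - r := by
    have := Real.log_le_sub_one_of_pos (show (0:ℝ) < 1/r by positivity)
    calc r * Real.log (1/r) ≤ r * (1/r - 1) := by nlinarith
      _ = 1 - r := by field_simp
  have h2 : 1 ≤ Real.log (1/c) := by
    rw [Real.le_log_iff_exp_le (by positivity)]
    calc Real.exp 1 ≤ 2.7182818286 := Real.exp_one_lt_d9.le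
      _ ≤ 4 := by norm_num
      _ ≤ 1/c := by rw [le_div_iff₀ hc]; linarith
  have hd_eq : d = c * r := by rw [hrdef]; field_simp
  calc d * Real.log (1/d) = c * r * Real.log (1/c) + c * (r * Real.log (1/r)) := by
        rw [hlog, hd_eq]; ring
    _ ≤ c * r * Real.log (1/c) + c * ((1 - r) * Real.log (1/c)) := by nlinarith
    _ = c * Real.log (1/c) := by ring

lemma key_ineq {c d : ℝ} (hc : 0 < c) (hc4 : c ≤ 1/4) (hd0 : 0 ≤ d) (hdc : d ≤ c) :
    d / (c * Real.logb 2 (1/c)) ≤ 1 / Real.logb 2 (1/d) := by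
  have hLc : 0 < Real.logb 2 (1/c) := Real.logb_pos (by norm_num)
    (by rw [lt_div_iff₀ hc]; linarith)
  rcases eq_or_lt_of_le hd0 with h | hd
  · rw [← h]
    simp [Real.logb]
  · have hLd : 0 < Real.logb 2 (1/d) := Real.logb_pos (by norm_num)
      (by rw [lt_div_iff₀ hd]; linarith)
    rw [div_le_div_iff₀ (by positivity) hLd]
    have := mul_log_mono hd hdc hc4
    have hl2 : 0 < Real.log 2 := Real.log_pos (by norm_num)
    simp only [Real.logb]
    rw [one_mul, ← mul_div_assoc, ← mul_div_assoc]
    gcongr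

/-- the rarefied family of disjoint intervals in Theorem 2. For a
non-atomic Borel probability measure `μ` on the Cantor space there is a sequence of
strings with pairwise disjoint cylinders, each of measure `< 1`, such that
`∑_{k : μ([x k]) > 0} 1 / log₂(1 / μ([x k])) = +∞`. -/
theorem stmt13 (μ : Measure (ℕ → Bool)) [IsProbabilityMeasure μ]
    (hna : ∀ ω : ℕ → Bool, μ {ω} = 0) :
    ∃ x : ℕ → List Bool,
      (∀ i j : ℕ, i ≠ j → Disjoint (cyl (x i)) (cyl (x j))) ∧
      (∀ k : ℕ, μ (cyl (x k)) < 1) ∧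
      ∑' k : {k : ℕ | 0 < μ (cyl (x k))},
          ENNReal.ofReal (1 / Real.logb 2 (1 / (μ (cyl (x k.1))).toReal)) = ⊤ := by
  classical
  set A : ℕ → ℝ := fun n => (μ (cyl (hb μ n))).toReal with hAdef
  set D : ℕ → ℝ := fun n => (μ (cyl (hb μ n ++ [!hbit μ (hb μ n)]))).toReal with hDdef
  have hne : ∀ s : List Bool, μ (cyl s) ≠ ⊤ := fun s => measure_ne_top μ _
  have hsplit : ∀ n, A n = A (n + 1) + D n := by
    intro n
    have := measure_cyl_split' μ (hb μ n)
    rw [hAdef, hDdef]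
    simp only
    rw [show hb μ (n+1) = hb μ n ++ [hbit μ (hb μ n)] from rfl, this,
      ENNReal.toReal_add (hne _) (hne _)]
  have hD0 : ∀ n, 0 ≤ D n := fun n => ENNReal.toReal_nonneg
  have hDle : ∀ n, D n ≤ A (n + 1) := by
    intro n
    rw [hAdef, hDdef]
    simp only
    rw [show hb μ (n+1) = hb μ n ++ [hbit μ (hb μ n)] from rfl]
    exact ENNReal.toReal_mono (hne _) (measure_other_le μ _)
  have hhalf : ∀ n, A n ≤ 2 * A (n + 1) := by
    intro n
    have := hsplit n
    have := hDle n
    linarith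
  have hA0 : A 0 = 1 := by
    rw [hAdef]
    simp [show hb μ 0 = [] from rfl, cyl_nil]
  have hApos : ∀ n, 0 < A n := by
    intro n
    induction n with
    | zero => rw [hA0]; norm_num
    | succ n ih =>
      have := hhalf n
      linarith
  have hAanti : Antitone A := by
    apply antitone_nat_of_succ_le
    intro n
    have := hsplit n
    have := hD0 n
    linarith
  have htend : Tendsto A atTop (nhds 0) := by
    have h1 : Tendsto (μ ∘ fun n => cyl (hb μ n)) atTop (nhds (μ (⋂ n, cyl (hb μ n)))) :=
      tendsto_measure_iInter_atTop (fun n => (measurableSet_cyl _).nullMeasurableSet)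
        (cyl_hb_antitone μ) ⟨0, hne _⟩
    have h2 : μ (⋂ n, cyl (hb μ n)) = 0 :=
      measure_mono_null (iInter_cyl_hb_subset μ) (hna _)
    rw [h2] at h1
    have h3 := (ENNReal.tendsto_toReal (show (0:ℝ≥0∞) ≠ ⊤ by simp)).comp h1
    exact h3
  have hfind : ∀ ε : ℝ, 0 < ε → ∃ n, A n ≤ ε := by
    intro ε hε
    obtain ⟨n, hn⟩ := (htend.eventually (gt_mem_nhds hε)).exists
    exact ⟨n, hn.le⟩
  have hN0ex : ∃ n, A n ≤ 1/4 := hfind _ (by norm_num)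
  set N0 : ℕ := Nat.find hN0ex with hN0def
  have hstep : ∀ p : ℕ, ∃ n, p < n ∧ A n ≤ A p / 4 := by
    intro p
    obtain ⟨m, hm⟩ := hfind (A p / 4) (by have := hApos p; linarith)
    exact ⟨max m (p + 1), by omega, le_trans (hAanti (le_max_left _ _)) hm⟩
  set N : ℕ → ℕ := fun j => (fun p => Nat.find (hstep p))^[j] N0 with hNdef
  have hNsucc : ∀ j, N (j + 1) = Nat.find (hstep (N j)) := by
    intro j
    rw [hNdef]
    simp [Function.iterate_succ_apply']
  have hN0 : N 0 = N0 := rfl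
  have hNlt : ∀ j, N j < N (j + 1) := by
    intro j
    rw [hNsucc j]
    exact (Nat.find_spec (hstep (N j))).1
  have hNquarter : ∀ j, A (N (j + 1)) ≤ A (N j) / 4 := by
    intro j
    rw [hNsucc j]
    exact (Nat.find_spec (hstep (N j))).2
  have hNmono : Monotone N := monotone_nat_of_le_succ fun j => (hNlt j).le
  have hA14 : ∀ j, A (N j) ≤ 1/4 :=
    fun j => le_trans (hAanti (hNmono (Nat.zero_le j))) (Nat.find_spec hN0ex)
  have hclow : ∀ j, (1/8 : ℝ)^(j + 1) < A (N j) := by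
    have hpred : ∀ p q : ℕ, q = Nat.find (hstep p) → A p / 8 < A q := by
      intro p q hq
      subst hq
      have hlt : p < Nat.find (hstep p) := (Nat.find_spec (hstep p)).1
      set q : ℕ := Nat.find (hstep p) with hqdef
      have h1 : A p / 4 < A (q - 1) := by
        rcases Nat.lt_or_ge p (q - 1) with h | h
        · have hq1 : q - 1 < Nat.find (hstep p) := by omega
          have := Nat.find_min (hstep p) hq1
          push_neg at this
          exact this h
        · have hpq : q - 1 = p := by omega
          rw [hpq]
          have := hApos p
          linarith
      have h2 : A (q - 1) ≤ 2 * A q := by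
        have := hhalf (q - 1)
        rwa [show q - 1 + 1 = q by omega] at this
      linarith
    intro j
    induction j with
    | zero =>
      have hN0pos : 0 < N0 := by
        rcases Nat.eq_zero_or_pos N0 with h | h
        · exfalso
          have := Nat.find_spec hN0ex
          rw [← hN0def, h, hA0] at this
          norm_num at this
        · exact h
      have h1 : 1/4 < A (N0 - 1) := by
        have := Nat.find_min hN0ex (show N0 - 1 < N0 by omega)
        push_neg at this
        exact this
      have h2 : A (N0 - 1) ≤ 2 * A N0 := by
        have := hhalf (N0 - 1)
        rwa [show N0 - 1 + 1 = N0 by omega] at this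
      have hgoal : (1/8 : ℝ) < A N0 := by linarith
      simpa [hN0] using hgoal
    | succ j ih =>
      have := hpred (N j) (N (j + 1)) (hNsucc j)
      calc (1/8 : ℝ)^(j + 1 + 1) = (1/8)^(j+1) / 8 := by ring
        _ < A (N j) / 8 := by linarith [ih]
        _ < A (N (j + 1)) := by linarith
  have hLj : ∀ j : ℕ, Real.logb 2 (1 / A (N j)) ≤ 3 * (j + 1) := by
    intro j
    have h8 : (1 : ℝ) / A (N j) ≤ 8 ^ (j + 1) := by
      rw [div_le_iff₀ (hApos _)]
      have := hclow j
      have h8p : (0:ℝ) < (8:ℝ)^(j+1) := by positivity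
      rw [show ((1:ℝ)/8)^(j+1) = 1 / 8^(j+1) by rw [div_pow]; norm_num] at this
      rw [← div_le_iff₀' h8p] at *
      linarith
    calc Real.logb 2 (1 / A (N j)) ≤ Real.logb 2 (8 ^ (j + 1)) :=
          Real.logb_le_logb_of_le one_lt_two (div_pos one_pos (hApos _)) h8
      _ = 3 * (j + 1) := by
          rw [show (8:ℝ) = 2^(3:ℕ) by norm_num, ← pow_mul, Real.logb_pow,
            Real.logb_self_eq_one one_lt_two]
          push_cast
          ring
  set val : ℕ → ℝ := fun n => 1 / Real.logb 2 (1 / D n) with hvaldef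
  have hAle1 : ∀ n, A n ≤ 1 := fun n => hA0 ▸ hAanti (Nat.zero_le n)
  have hvalpos : ∀ n, 0 < D n → 0 < val n := by
    intro n h
    have hDlt1 : D n < 1 := by
      have := hsplit n
      have := hApos (n + 1)
      have := hAle1 n
      linarith
    have h1 : 1 < 1 / D n := by
      rw [lt_div_iff₀ h]
      linarith
    exact div_pos one_pos (Real.logb_pos one_lt_two h1)
  have hvalnn : ∀ n, 0 ≤ val n := by
    intro n
    rcases eq_or_lt_of_le (hD0 n) with h | h
    · rw [hvaldef]
      simp only [← h]
      simp [Real.logb]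
    · exact (hvalpos n h).le
  have htel : ∀ p m : ℕ, ∑ n ∈ Finset.Ico p (p + m), D n = A p - A (p + m) := by
    intro p m
    induction m with
    | zero => simp
    | succ m ih =>
      rw [← add_assoc, Finset.sum_Ico_succ_top (by omega), ih]
      have := hsplit (p + m)
      have : A (p + m + 1) = A (p + m) - D (p + m) := by linarith
      rw [this]
      ring
  have hblock : ∀ j : ℕ, (3/4 : ℝ) / (3 * ((j:ℝ) + 1)) ≤
      ∑ n ∈ Finset.Ico (N j) (N (j + 1)), val n := by
    intro j
    have hc : 0 < A (N j) := hApos _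
    have hc4 : A (N j) ≤ 1/4 := hA14 j
    have hL : 0 < Real.logb 2 (1 / A (N j)) :=
      Real.logb_pos one_lt_two (by rw [lt_div_iff₀ hc]; linarith)
    have hcL : 0 < A (N j) * Real.logb 2 (1 / A (N j)) := mul_pos hc hL
    have hper : ∀ n ∈ Finset.Ico (N j) (N (j + 1)),
        D n / (A (N j) * Real.logb 2 (1 / A (N j))) ≤ val n := by
      intro n hn
      have hn1 := (Finset.mem_Ico.1 hn).1
      have hDA : D n ≤ A n := by
        have := hsplit n
        have := hApos (n + 1)
        linarith
      exact key_ineq hc hc4 (hD0 n) (le_trans hDA (hAanti hn1))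
    have htel' : ∑ n ∈ Finset.Ico (N j) (N (j + 1)), D n = A (N j) - A (N (j + 1)) := by
      have := htel (N j) (N (j + 1) - N j)
      rwa [show N j + (N (j + 1) - N j) = N (j + 1) by have := hNlt j; omega] at this
    have h34 : (3/4) * A (N j) ≤ ∑ n ∈ Finset.Ico (N j) (N (j + 1)), D n := by
      rw [htel']
      have := hNquarter j
      linarith
    calc (3/4 : ℝ) / (3 * ((j:ℝ) + 1)) ≤ (3/4) / Real.logb 2 (1 / A (N j)) := by
          apply div_le_div_of_nonneg_left (by norm_num) hL (hLj j)
      _ = ((3/4) * A (N j)) / (A (N j) * Real.logb 2 (1 / A (N j))) := by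
          rw [mul_comm (3/4 : ℝ) (A (N j)), mul_div_mul_left _ _ hc.ne']
      _ ≤ (∑ n ∈ Finset.Ico (N j) (N (j + 1)), D n) /
            (A (N j) * Real.logb 2 (1 / A (N j))) := by
          gcongr
      _ = ∑ n ∈ Finset.Ico (N j) (N (j + 1)),
            D n / (A (N j) * Real.logb 2 (1 / A (N j))) := Finset.sum_div _ _ _
      _ ≤ ∑ n ∈ Finset.Ico (N j) (N (j + 1)), val n := Finset.sum_le_sum hper
  have hchain : ∀ J : ℕ, ∑ j ∈ Finset.range J, (3/4 : ℝ) / (3 * ((j:ℝ) + 1)) ≤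
      ∑ n ∈ Finset.Ico (N 0) (N J), val n := by
    intro J
    induction J with
    | zero => simp
    | succ J ih =>
      rw [Finset.sum_range_succ,
        ← Finset.sum_Ico_consecutive _ (hNmono (Nat.zero_le J)) (hNlt J).le]
      exact add_le_add ih (hblock J)
  refine ⟨fun k => hb μ (N0 + k) ++ [!hbit μ (hb μ (N0 + k))], ?_, ?_, ?_⟩
  · have hd : ∀ i j : ℕ, i < j →
        Disjoint (cyl (hb μ (N0 + i) ++ [!hbit μ (hb μ (N0 + i))]))
          (cyl (hb μ (N0 + j) ++ [!hbit μ (hb μ (N0 + j))])) := by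
      intro i j hij
      have h1 : cyl (hb μ (N0 + j) ++ [!hbit μ (hb μ (N0 + j))]) ⊆ cyl (hb μ (N0 + i + 1)) :=
        subset_trans (cyl_append_subset _ _) (cyl_hb_antitone μ (by omega))
      have h2 : Disjoint (cyl (hb μ (N0 + i) ++ [!hbit μ (hb μ (N0 + i))]))
          (cyl (hb μ (N0 + i + 1))) := by
        rw [show hb μ (N0 + i + 1) = hb μ (N0 + i) ++ [hbit μ (hb μ (N0 + i))] from rfl]
        exact (disjoint_cyl_concat' _ _).symm
      exact h2.mono_right h1
    intro i j hij
    rcases hij.lt_or_gt with h | h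
    · exact hd i j h
    · exact (hd j i h).symm
  · intro k
    have hsub : cyl (hb μ (N0 + k) ++ [!hbit μ (hb μ (N0 + k))]) ⊆ cyl (hb μ N0) :=
      subset_trans (cyl_append_subset _ _) (cyl_hb_antitone μ (Nat.le_add_right N0 k))
    have h1 : (μ (cyl (hb μ N0))).toReal ≤ 1/4 := Nat.find_spec hN0ex
    have h2 : μ (cyl (hb μ N0)) ≤ ENNReal.ofReal (1/4) :=
      (ENNReal.le_ofReal_iff_toReal_le (hne _) (by norm_num)).2 h1
    refine lt_of_le_of_lt (le_trans (measure_mono hsub) h2) ?_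
    rw [show (1 : ℝ≥0∞) = ENNReal.ofReal 1 by simp]
    exact ENNReal.ofReal_lt_ofReal_iff_of_nonneg (by norm_num) |>.2 (by norm_num)
  · show ∑' (k : {k : ℕ | 0 < μ (cyl (hb μ (N0 + k) ++ [!hbit μ (hb μ (N0 + k))]))}),
        ENNReal.ofReal (1 / Real.logb 2
          (1 / (μ (cyl (hb μ (N0 + (k:ℕ)) ++ [!hbit μ (hb μ (N0 + (k:ℕ)))]))).toReal)) = ⊤
    refine Eq.trans (tsum_subtype
      {k : ℕ | 0 < μ (cyl (hb μ (N0 + k) ++ [!hbit μ (hb μ (N0 + k))]))}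
      (fun k => ENNReal.ofReal (1 / Real.logb 2
        (1 / (μ (cyl (hb μ (N0 + k) ++ [!hbit μ (hb μ (N0 + k))]))).toReal)))) ?_
    have hind : Set.indicator
        {k : ℕ | 0 < μ (cyl (hb μ (N0 + k) ++ [!hbit μ (hb μ (N0 + k))]))}
        (fun k => ENNReal.ofReal (1 / Real.logb 2
          (1 / (μ (cyl (hb μ (N0 + k) ++ [!hbit μ (hb μ (N0 + k))]))).toReal)))
        = fun k => ENNReal.ofReal (1 / Real.logb 2
          (1 / (μ (cyl (hb μ (N0 + k) ++ [!hbit μ (hb μ (N0 + k))]))).toReal)) := by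
      funext k
      rw [Set.indicator_apply]
      split_ifs with h
      · rfl
      · simp only [Set.mem_setOf_eq, not_lt, le_zero_iff] at h
        simp [h, Real.logb]
    rw [hind]
    have hgval : ∀ k : ℕ, ENNReal.ofReal (1 / Real.logb 2
        (1 / (μ (cyl (hb μ (N0 + k) ++ [!hbit μ (hb μ (N0 + k))]))).toReal))
        = ENNReal.ofReal (val (N0 + k)) := fun k => rfl
    simp only [hgval]
    by_contra hne'
    have hdiv : Tendsto (fun J => ∑ j ∈ Finset.range J, (3/4 : ℝ) / (3 * ((j:ℝ) + 1)))
        atTop atTop := by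
      have heq : ∀ j : ℕ, (3/4 : ℝ) / (3 * ((j:ℝ) + 1)) = (1/4) * (1 / ((j:ℝ) + 1)) := by
        intro j
        have hj : ((j:ℝ) + 1) ≠ 0 := by positivity
        field_simp
      simp only [heq, ← Finset.mul_sum]
      exact Tendsto.const_mul_atTop (by norm_num) Real.tendsto_sum_range_one_div_nat_succ_atTop
    have hlb : ∀ J : ℕ, ENNReal.ofReal (∑ j ∈ Finset.range J, (3/4 : ℝ) / (3 * ((j:ℝ) + 1)))
        ≤ ∑' k, ENNReal.ofReal (val (N0 + k)) := by
      intro J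
      have h1 : ∑ k ∈ Finset.range (N J - N0), ENNReal.ofReal (val (N0 + k))
          ≤ ∑' k, ENNReal.ofReal (val (N0 + k)) := ENNReal.sum_le_tsum _
      have h2 : ∑ k ∈ Finset.range (N J - N0), ENNReal.ofReal (val (N0 + k))
          = ENNReal.ofReal (∑ k ∈ Finset.range (N J - N0), val (N0 + k)) :=
        (ENNReal.ofReal_sum_of_nonneg (fun k _ => hvalnn _)).symm
      have h3 : ∑ n ∈ Finset.Ico N0 (N J), val n
          = ∑ k ∈ Finset.range (N J - N0), val (N0 + k) := Finset.sum_Ico_eq_sum_range _ _ _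
      refine le_trans ?_ h1
      rw [h2]
      apply ENNReal.ofReal_le_ofReal
      rw [← h3]
      exact hchain J
    obtain ⟨J, hJ⟩ := (hdiv.eventually
      (eventually_gt_atTop ((∑' k, ENNReal.ofReal (val (N0 + k))).toReal))).exists
    have h4 := (ENNReal.ofReal_le_iff_le_toReal hne').1 (hlb J)
    linarith
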